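/- arXiv:1903.11802 — 5 statements merged into one kernel-verified Lean document; each statement's English description precedes it below -/
import Mathlib

section
/- Let (A, m) be an associative algebra and R : A → A a Rota-Baxter operator of weight zero, i.e. m(R(a), R(b)) = R(m(a, R(b)) + m(R(a), b)) for all a, b. Then the operations a ≺ b := m(a, R(b)) and a ≻ b := m(R(a), b) make A a dendriform algebra. -/
/-- A Rota-Baxter operator `R` of weight zero on an associative
algebra `(A, m)` induces a dendriform algebra structure on `A` via
`a ≺ b := m a (R b)` and `a ≻ b := m (R a) b`. -/
theorem rotaBaxter_gives_dendriform
    {K A : Type*} [Field K] [AddCommGroup A] [Module K A]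
    (m : A →ₗ[K] A →ₗ[K] A)
    (hassoc : ∀ a b c : A, m (m a b) c = m a (m b c))
    (R : A →ₗ[K] A)
    (hRB : ∀ a b : A, m (R a) (R b) = R (m a (R b) + m (R a) b)) :
    (∀ a b c : A,
        m (m a (R b)) (R c) = m a (R (m b (R c) + m (R b) c))) ∧
    (∀ a b c : A,
        m (m (R a) b) (R c) = m (R a) (m b (R c))) ∧
    (∀ a b c : A,
        m (R (m a (R b) + m (R a) b)) c = m (R a) (m (R b) c)) :=
  ⟨fun a b c => by rw [hassoc, hRB],
   fun a b c => hassoc (R a) b (R c),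
   fun a b c => by rw [← hRB, hassoc]⟩
end

section
/- Let (A, ≺, ≻) be a dendriform algebra and define π_A ∈ O(2) = Hom(K[C_2] ⊗ A^{⊗2}, A) by π_A([1]; a, b) = a ≺ b and π_A([2]; a, b) = a ≻ b. Then π_A ∘_1 π_A = π_A ∘_2 π_A, i.e. π_A is a multiplication in the operad {O(n)}. -/
section

variable {A : Type*} [AddCommMonoid A]

/-- Elements of `O(n) = Hom(K[Cₙ] ⊗ A^{⊗n}, A)`, encoded as functions of a
(0-based) label `r < n` and an argument tuple. -/
abbrev DendOp (A : Type*) := ℕ → (ℕ → A) → A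

/-- The partial composition `f ∘ᵢ g` (0-based `i`, `n` = arity of `g`),
defined via the combinatorial maps `R_0` and `R_i`; the value of `g` at the
sum of labels `[1] + ⋯ + [n]` is the sum of its values. -/
def ocomp (i n : ℕ) (f g : DendOp A) : DendOp A :=
  fun r a =>
    f (if r < i then r else if r < i + n then i else r - n + 1)
      (fun k =>
        if k < i then a k
        else if k = i then
          (if i ≤ r ∧ r < i + n then g (r - i) (fun l => a (i + l))
           else ∑ t ∈ Finset.range n, g t (fun l => a (i + l)))
        else a (k + n - 1))

end

/-- The element `π_A ∈ O(2)` of a dendriform algebra: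
`π_A([1]; a, b) = a ≺ b`, `π_A([2]; a, b) = a ≻ b` (labels 0-based). -/
def dendPi {K A : Type*} [Field K] [AddCommGroup A] [Module K A]
    (p s : A →ₗ[K] A →ₗ[K] A) : DendOp A :=
  fun r a => if r = 0 then p (a 0) (a 1) else if r = 1 then s (a 0) (a 1) else 0

/-!
Evaluating both composites label by label, `π_A ∘₁ π_A` and `π_A ∘₂ π_A` at `[1]`, `[2]`, `[3]` are
exactly the two sides of the three dendriform axioms; the summed label `[1] + [2]` of the inner
`π_A` is what produces `a ≺ b + a ≻ b` in the third one.
-/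

section

variable {K A : Type*} [Field K] [AddCommGroup A] [Module K A] (p s : A →ₗ[K] A →ₗ[K] A)
  (a : ℕ → A)

theorem ocomp_zero_dendPi_label_zero :
    ocomp 0 2 (dendPi p s) (dendPi p s) 0 a = p (p (a 0) (a 1)) (a 2) := by
  simp [ocomp, dendPi]

theorem ocomp_zero_dendPi_label_one :
    ocomp 0 2 (dendPi p s) (dendPi p s) 1 a = p (s (a 0) (a 1)) (a 2) := by
  simp [ocomp, dendPi]

theorem ocomp_zero_dendPi_label_two :
    ocomp 0 2 (dendPi p s) (dendPi p s) 2 a = s (p (a 0) (a 1) + s (a 0) (a 1)) (a 2) := by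
  simp [ocomp, dendPi, Finset.sum_range_succ]

theorem ocomp_one_dendPi_label_zero :
    ocomp 1 2 (dendPi p s) (dendPi p s) 0 a = p (a 0) (p (a 1) (a 2) + s (a 1) (a 2)) := by
  simp [ocomp, dendPi, Finset.sum_range_succ]

theorem ocomp_one_dendPi_label_one :
    ocomp 1 2 (dendPi p s) (dendPi p s) 1 a = s (a 0) (p (a 1) (a 2)) := by
  simp [ocomp, dendPi]

theorem ocomp_one_dendPi_label_two :
    ocomp 1 2 (dendPi p s) (dendPi p s) 2 a = s (a 0) (s (a 1) (a 2)) := by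
  simp [ocomp, dendPi]

end

/-- for a dendriform algebra `(A, ≺ = p, ≻ = s)`, the element
`π_A ∈ O(2)` satisfies `π_A ∘₁ π_A = π_A ∘₂ π_A` (as elements of `O(3)`,
i.e. at every label `r < 3`), so `π_A` is a multiplication in the operad
`{O(n)}`.  (0-based: `∘₁ = ocomp 0`, `∘₂ = ocomp 1`.) -/
theorem dendriform_pi_is_multiplication
    {K A : Type*} [Field K] [AddCommGroup A] [Module K A]
    (p s : A →ₗ[K] A →ₗ[K] A)
    (hd1 : ∀ a b c : A, p (p a b) c = p a (p b c + s b c))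
    (hd2 : ∀ a b c : A, p (s a b) c = s a (p b c))
    (hd3 : ∀ a b c : A, s (p a b + s a b) c = s a (s b c)) :
    ∀ r < 3, ∀ a : ℕ → A,
      ocomp 0 2 (dendPi p s) (dendPi p s) r a
        = ocomp 1 2 (dendPi p s) (dendPi p s) r a := by
  intro r hr a
  interval_cases r
  · rw [ocomp_zero_dendPi_label_zero, ocomp_one_dendPi_label_zero, hd1]
  · rw [ocomp_zero_dendPi_label_one, ocomp_one_dendPi_label_one, hd2]
  · rw [ocomp_zero_dendPi_label_two, ocomp_one_dendPi_label_two, hd3]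
end

section
/- For a dendriform algebra A and a representation M, there is a canonical bijection between the second dendriform cohomology group H²_dend(A, M) and the set Ext(A, M) of equivalence classes of abelian extensions of A by M inducing the given representation. -/
universe u

section

variable (K : Type u) [Field K] (A M : Type u)
  [AddCommGroup A] [Module K A] [AddCommGroup M] [Module K M]
  (p s : A →ₗ[K] A →ₗ[K] A)
  (t10 t11 : A →ₗ[K] M →ₗ[K] M) (t20 t21 : M →ₗ[K] A →ₗ[K] M)

/-- An abelian extension `0 → M → E → A → 0` of the dendriform algebra
`(A, p, s)` by `M`, split over `K`, inducing the prescribed representation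
`(t10, t11, t20, t21)` on `M` (`M` carries the trivial dendriform structure). -/
structure AbelianExt where
  E : Type u
  [grp : AddCommGroup E]
  [mod : Module K E]
  /-- the two dendriform products `≺, ≻` of `E` -/
  q0 : E →ₗ[K] E →ₗ[K] E
  q1 : E →ₗ[K] E →ₗ[K] E
  dend1 : ∀ a b c : E, q0 (q0 a b) c = q0 a (q0 b c + q1 b c)
  dend2 : ∀ a b c : E, q0 (q1 a b) c = q1 a (q0 b c)
  dend3 : ∀ a b c : E, q1 (q0 a b + q1 a b) c = q1 a (q1 b c)
  i : M →ₗ[K] E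
  j : E →ₗ[K] A
  iInj : Function.Injective i
  jSurj : Function.Surjective j
  exact : ∀ e : E, j e = 0 ↔ e ∈ Set.range i
  /-- `i` is a morphism from the trivial dendriform structure on `M` -/
  iMorph0 : ∀ m n : M, q0 (i m) (i n) = 0
  iMorph1 : ∀ m n : M, q1 (i m) (i n) = 0
  /-- `j` is a morphism of dendriform algebras -/
  jMorph0 : ∀ e f : E, j (q0 e f) = p (j e) (j f)
  jMorph1 : ∀ e f : E, j (q1 e f) = s (j e) (j f)
  /-- the `K`-linear splitting -/
  sec : A →ₗ[K] E
  secProp : ∀ a : A, j (sec a) = a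
  /-- the induced representation on `M` is the prescribed one -/
  rep10 : ∀ (a : A) (m : M), q0 (sec a) (i m) = i (t10 a m)
  rep11 : ∀ (a : A) (m : M), q1 (sec a) (i m) = i (t11 a m)
  rep20 : ∀ (m : M) (a : A), q0 (i m) (sec a) = i (t20 m a)
  rep21 : ∀ (m : M) (a : A), q1 (i m) (sec a) = i (t21 m a)

/-- Equivalence of abelian extensions: a dendriform morphism `φ : E → E'`
commuting with the inclusions of `M` and projections to `A`. -/
def ExtEquiv (X Y : AbelianExt K A M p s t10 t11 t20 t21) : Prop :=
  letI := X.grp; letI := X.mod; letI := Y.grp; letI := Y.mod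
  ∃ φ : X.E →ₗ[K] Y.E,
    (∀ e f : X.E, φ (X.q0 e f) = Y.q0 (φ e) (φ f)) ∧
    (∀ e f : X.E, φ (X.q1 e f) = Y.q1 (φ e) (φ f)) ∧
    (∀ m : M, φ (X.i m) = Y.i m) ∧
    (∀ e : X.E, Y.j (φ e) = X.j e)

/-- 2-cocycles `f = (f0, f1) ∈ C²_dend(A, M)`: the condition `δ_dend f = 0`
written at the three labels of `C₃`. -/
def IsCocycle2 (f : (A →ₗ[K] A →ₗ[K] M) × (A →ₗ[K] A →ₗ[K] M)) : Prop :=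
  (∀ a b c : A,
    t10 a (f.1 b c + f.2 b c) - f.1 (p a b) c + f.1 a (p b c + s b c)
      - t20 (f.1 a b) c = 0) ∧
  (∀ a b c : A,
    t11 a (f.1 b c) - f.1 (s a b) c + f.2 a (p b c) - t20 (f.2 a b) c = 0) ∧
  (∀ a b c : A,
    t11 a (f.2 b c) - f.2 (p a b + s a b) c + f.2 a (s b c)
      - t21 (f.1 a b + f.2 a b) c = 0)

/-- Two 2-cocycles are cohomologous if they differ by the coboundary
`δ_dend g` of a 1-cochain `g ∈ C¹_dend(A, M) = Hom(A, M)`. -/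
def Cohomologous
    (f g : {f : (A →ₗ[K] A →ₗ[K] M) × (A →ₗ[K] A →ₗ[K] M) //
      IsCocycle2 K A M p s t10 t11 t20 t21 f}) : Prop :=
  ∃ φ : A →ₗ[K] M,
    (∀ a b : A, f.1.1 a b - g.1.1 a b = t10 a (φ b) + t20 (φ a) b - φ (p a b)) ∧
    (∀ a b : A, f.1.2 a b - g.1.2 a b = t11 a (φ b) + t21 (φ a) b - φ (s a b))

end

attribute [instance] AbelianExt.grp AbelianExt.mod

set_option linter.unnecessarySeqFocus false

noncomputable section DendAux
namespace DendAux

variable {K : Type u} [Field K] {A M : Type u}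
  [AddCommGroup A] [Module K A] [AddCommGroup M] [Module K M]
  (p s : A →ₗ[K] A →ₗ[K] A)
  (t10 t11 : A →ₗ[K] M →ₗ[K] M) (t20 t21 : M →ₗ[K] A →ₗ[K] M)

/-- bilinear product on `M × A` built from a representation pair, a
2-cochain and a product on `A` -/
def prodMul (t1 : A →ₗ[K] M →ₗ[K] M) (t2 : M →ₗ[K] A →ₗ[K] M)
    (f : A →ₗ[K] A →ₗ[K] M) (q : A →ₗ[K] A →ₗ[K] A) :
    (M × A) →ₗ[K] (M × A) →ₗ[K] (M × A) :=
  LinearMap.mk₂ K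
    (fun x y => (t1 x.2 y.1 + t2 x.1 y.2 + f x.2 y.2, q x.2 y.2))
    (by intro x x' y; ext <;> simp <;> abel)
    (by intro c x y; ext <;> simp)
    (by intro x y y'; ext <;> simp <;> abel)
    (by intro c x y; ext <;> simp)

@[simp] theorem prodMul_apply (t1 : A →ₗ[K] M →ₗ[K] M) (t2 : M →ₗ[K] A →ₗ[K] M)
    (f : A →ₗ[K] A →ₗ[K] M) (q : A →ₗ[K] A →ₗ[K] A) (x y : M × A) :
    prodMul t1 t2 f q x y = (t1 x.2 y.1 + t2 x.1 y.2 + f x.2 y.2, q x.2 y.2) := rfl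

variable (hd1 : ∀ a b c : A, p (p a b) c = p a (p b c + s b c))
    (hd2 : ∀ a b c : A, p (s a b) c = s a (p b c))
    (hd3 : ∀ a b c : A, s (p a b + s a b) c = s a (s b c))
    (hr1 : ∀ (a b : A) (m : M), t10 (p a b) m = t10 a (t10 b m + t11 b m))
    (hr2 : ∀ (a b : A) (m : M), t10 (s a b) m = t11 a (t10 b m))
    (hr3 : ∀ (a b : A) (m : M), t11 (p a b + s a b) m = t11 a (t11 b m))
    (hr4 : ∀ (a : A) (m : M) (c : A), t20 (t10 a m) c = t10 a (t20 m c + t21 m c))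
    (hr5 : ∀ (a : A) (m : M) (c : A), t20 (t11 a m) c = t11 a (t20 m c))
    (hr6 : ∀ (a : A) (m : M) (c : A), t21 (t10 a m + t11 a m) c = t11 a (t21 m c))
    (hr7 : ∀ (m : M) (b c : A), t20 (t20 m b) c = t20 m (p b c + s b c))
    (hr8 : ∀ (m : M) (b c : A), t20 (t21 m b) c = t21 m (p b c))
    (hr9 : ∀ (m : M) (b c : A), t21 (t20 m b + t21 m b) c = t21 m (s b c))

/-- the extension of `A` by `M` built from a 2-cocycle -/
@[reducible] def extOf (f : (A →ₗ[K] A →ₗ[K] M) × (A →ₗ[K] A →ₗ[K] M))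
    (hf : IsCocycle2 K A M p s t10 t11 t20 t21 f) :
    AbelianExt K A M p s t10 t11 t20 t21 where
  E := M × A
  q0 := prodMul t10 t20 f.1 p
  q1 := prodMul t11 t21 f.2 s
  dend1 := by
    rintro ⟨m, a⟩ ⟨n, b⟩ ⟨k, c⟩
    have h1 := hr1 a b k
    have h2 := hr4 a n c
    have h3 := hr7 m b c
    have hc := hf.1 a b c
    simp only [prodMul_apply, Prod.mk_add_mk, Prod.mk.injEq, map_add, map_sub,
      LinearMap.add_apply, LinearMap.sub_apply] at h1 h2 h3 hc ⊢
    exact ⟨by linear_combination (norm := module) h1 + h2 + h3 - hc, by rw [hd1 a b c, map_add]⟩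
  dend2 := by
    rintro ⟨m, a⟩ ⟨n, b⟩ ⟨k, c⟩
    have h1 := hr2 a b k
    have h2 := hr5 a n c
    have h3 := hr8 m b c
    have hc := hf.2.1 a b c
    simp only [prodMul_apply, Prod.mk_add_mk, Prod.mk.injEq, map_add, map_sub,
      LinearMap.add_apply, LinearMap.sub_apply] at h1 h2 h3 hc ⊢
    exact ⟨by linear_combination (norm := module) h1 + h2 + h3 - hc, hd2 a b c⟩
  dend3 := by
    rintro ⟨m, a⟩ ⟨n, b⟩ ⟨k, c⟩
    have h1 := hr3 a b k
    have h2 := hr6 a n c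
    have h3 := hr9 m b c
    have hc := hf.2.2 a b c
    have hA := hd3 a b c
    simp only [prodMul_apply, Prod.mk_add_mk, Prod.mk.injEq, map_add, map_sub,
      LinearMap.add_apply, LinearMap.sub_apply] at h1 h2 h3 hc hA ⊢
    exact ⟨by linear_combination (norm := module) h1 + h2 + h3 - hc, hA⟩
  i := LinearMap.inl K M A
  j := LinearMap.snd K M A
  iInj := LinearMap.inl_injective
  jSurj := fun a => ⟨(0, a), rfl⟩
  exact := by
    rintro ⟨m, a⟩
    constructor
    · rintro h
      exact ⟨m, by simp [LinearMap.snd_apply] at h; simp [h]⟩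
    · rintro ⟨n, hn⟩
      rw [← hn]; rfl
  iMorph0 := by intro m n; ext <;> simp
  iMorph1 := by intro m n; ext <;> simp
  jMorph0 := by intro e f'; simp
  jMorph1 := by intro e f'; simp
  sec := LinearMap.inr K M A
  secProp := fun a => rfl
  rep10 := by intro a m; ext <;> simp
  rep11 := by intro a m; ext <;> simp
  rep20 := by intro m a; ext <;> simp
  rep21 := by intro m a; ext <;> simp


variable {p s t10 t11 t20 t21} in
/-- `M` is linearly equivalent to `ker j` -/
def kerEquiv (X : AbelianExt K A M p s t10 t11 t20 t21) :
    M ≃ₗ[K] LinearMap.ker X.j :=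
  LinearEquiv.ofBijective
    (X.i.codRestrict (LinearMap.ker X.j)
      (fun m => by rw [LinearMap.mem_ker]; exact (X.exact _).mpr ⟨m, rfl⟩))
    ⟨fun m n h => X.iInj (congrArg Subtype.val h),
     by rintro ⟨e, he⟩
        obtain ⟨m, hm⟩ := (X.exact e).mp (LinearMap.mem_ker.mp he)
        exact ⟨m, Subtype.ext hm⟩⟩

variable {p s t10 t11 t20 t21} in
theorem i_kerEquiv_symm (X : AbelianExt K A M p s t10 t11 t20 t21)
    (v : LinearMap.ker X.j) : X.i ((kerEquiv X).symm v) = v := by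
  have : (X.i.codRestrict (LinearMap.ker X.j) _) ((kerEquiv X).symm v) = v :=
    (kerEquiv X).apply_symm_apply v
  exact congrArg Subtype.val this

variable {p s t10 t11 t20 t21} in
/-- extract a 2-cochain from an extension -/
def extract (X : AbelianExt K A M p s t10 t11 t20 t21)
    (q : X.E →ₗ[K] X.E →ₗ[K] X.E) (qA : A →ₗ[K] A →ₗ[K] A)
    (hq : ∀ e f : X.E, X.j (q e f) = qA (X.j e) (X.j f)) :
    A →ₗ[K] A →ₗ[K] M :=
  LinearMap.mk₂ K
    (fun a b => (kerEquiv X).symm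
      ⟨q (X.sec a) (X.sec b) - X.sec (qA a b), by
        rw [LinearMap.mem_ker, map_sub, hq, X.secProp, X.secProp, X.secProp,
          sub_self]⟩)
    (by intro a a' b
        rw [← map_add]; congr 1; apply Subtype.ext
        simp only [Submodule.coe_add, map_add, LinearMap.add_apply]; abel)
    (by intro c a b
        rw [← map_smul]; congr 1; apply Subtype.ext
        simp only [SetLike.val_smul, map_smul, LinearMap.smul_apply, smul_sub])
    (by intro a b b'
        rw [← map_add]; congr 1; apply Subtype.ext
        simp only [Submodule.coe_add, map_add, LinearMap.add_apply]; abel)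
    (by intro c a b
        rw [← map_smul]; congr 1; apply Subtype.ext
        simp only [SetLike.val_smul, map_smul, LinearMap.smul_apply, smul_sub])

variable {p s t10 t11 t20 t21} in
theorem i_extract (X : AbelianExt K A M p s t10 t11 t20 t21)
    (q : X.E →ₗ[K] X.E →ₗ[K] X.E) (qA : A →ₗ[K] A →ₗ[K] A)
    (hq : ∀ e f : X.E, X.j (q e f) = qA (X.j e) (X.j f)) (a b : A) :
    X.i (extract X q qA hq a b) = q (X.sec a) (X.sec b) - X.sec (qA a b) := by
  rw [extract, LinearMap.mk₂_apply, i_kerEquiv_symm]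


variable {p s t10 t11 t20 t21} in
/-- the 2-cocycle extracted from an extension -/
def cocycleOf (X : AbelianExt K A M p s t10 t11 t20 t21) :
    {f : (A →ₗ[K] A →ₗ[K] M) × (A →ₗ[K] A →ₗ[K] M) //
      IsCocycle2 K A M p s t10 t11 t20 t21 f} := by
  refine ⟨(extract X X.q0 p X.jMorph0, extract X X.q1 s X.jMorph1), ?_, ?_, ?_⟩
  · intro a b c
    apply X.iInj
    have e1 : X.i (t10 a (extract X X.q0 p X.jMorph0 b c)) =
        X.q0 (X.sec a) (X.q0 (X.sec b) (X.sec c) - X.sec (p b c)) := by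
      rw [← X.rep10, i_extract]
    have e2 : X.i (t10 a (extract X X.q1 s X.jMorph1 b c)) =
        X.q0 (X.sec a) (X.q1 (X.sec b) (X.sec c) - X.sec (s b c)) := by
      rw [← X.rep10, i_extract]
    have e3 := i_extract X X.q0 p X.jMorph0 (p a b) c
    have e4 := i_extract X X.q0 p X.jMorph0 a (p b c)
    have e5 := i_extract X X.q0 p X.jMorph0 a (s b c)
    have e6 : X.i (t20 (extract X X.q0 p X.jMorph0 a b) c) =
        X.q0 (X.q0 (X.sec a) (X.sec b) - X.sec (p a b)) (X.sec c) := by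
      rw [← X.rep20, i_extract]
    have d1 := X.dend1 (X.sec a) (X.sec b) (X.sec c)
    have hs := congrArg X.sec (hd1 a b c)
    simp only [map_add, map_sub, map_zero, LinearMap.add_apply,
      LinearMap.sub_apply] at e1 e2 e3 e4 e5 e6 d1 hs ⊢
    linear_combination (norm := module) e1 + e2 - e3 + e4 + e5 - e6 - d1 + hs
  · intro a b c
    apply X.iInj
    have e1 : X.i (t11 a (extract X X.q0 p X.jMorph0 b c)) =
        X.q1 (X.sec a) (X.q0 (X.sec b) (X.sec c) - X.sec (p b c)) := by
      rw [← X.rep11, i_extract]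
    have e2 := i_extract X X.q0 p X.jMorph0 (s a b) c
    have e3 := i_extract X X.q1 s X.jMorph1 a (p b c)
    have e4 : X.i (t20 (extract X X.q1 s X.jMorph1 a b) c) =
        X.q0 (X.q1 (X.sec a) (X.sec b) - X.sec (s a b)) (X.sec c) := by
      rw [← X.rep20, i_extract]
    have d2 := X.dend2 (X.sec a) (X.sec b) (X.sec c)
    have hs := congrArg X.sec (hd2 a b c)
    simp only [map_add, map_sub, map_zero, LinearMap.add_apply,
      LinearMap.sub_apply] at e1 e2 e3 e4 d2 hs ⊢
    linear_combination (norm := module) e1 - e2 + e3 - e4 - d2 + hs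
  · intro a b c
    apply X.iInj
    have e1 : X.i (t11 a (extract X X.q1 s X.jMorph1 b c)) =
        X.q1 (X.sec a) (X.q1 (X.sec b) (X.sec c) - X.sec (s b c)) := by
      rw [← X.rep11, i_extract]
    have e2 := i_extract X X.q1 s X.jMorph1 (p a b + s a b) c
    have e3 := i_extract X X.q1 s X.jMorph1 a (s b c)
    have e4 : X.i (t21 (extract X X.q0 p X.jMorph0 a b
        + extract X X.q1 s X.jMorph1 a b) c) =
        X.q1 (X.q0 (X.sec a) (X.sec b) - X.sec (p a b)
          + (X.q1 (X.sec a) (X.sec b) - X.sec (s a b))) (X.sec c) := by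
      rw [← X.rep21, map_add, i_extract, i_extract]
    have d3 := X.dend3 (X.sec a) (X.sec b) (X.sec c)
    have hs := congrArg X.sec (hd3 a b c)
    simp only [map_add, map_sub, map_zero, LinearMap.add_apply,
      LinearMap.sub_apply] at e1 e2 e3 e4 d3 hs ⊢
    linear_combination (norm := module) e1 - e2 + e3 - e4 - d3 + hs


theorem equivOfCoh (f g : {f : (A →ₗ[K] A →ₗ[K] M) × (A →ₗ[K] A →ₗ[K] M) //
      IsCocycle2 K A M p s t10 t11 t20 t21 f})
    (h : Cohomologous K A M p s t10 t11 t20 t21 f g) :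
    ExtEquiv K A M p s t10 t11 t20 t21
      (extOf p s t10 t11 t20 t21 hd1 hd2 hd3 hr1 hr2 hr3 hr4 hr5 hr6 hr7 hr8 hr9 f.1 f.2)
      (extOf p s t10 t11 t20 t21 hd1 hd2 hd3 hr1 hr2 hr3 hr4 hr5 hr6 hr7 hr8 hr9 g.1 g.2) := by
  obtain ⟨c, h0, h1⟩ := h
  refine ⟨LinearMap.prod (LinearMap.fst K M A + c ∘ₗ LinearMap.snd K M A)
    (LinearMap.snd K M A), ?_, ?_, ?_, ?_⟩
  · rintro ⟨m, a⟩ ⟨n, b⟩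
    have hc := h0 a b
    simp only [extOf, prodMul_apply, LinearMap.prod_apply, Function.prod,
      LinearMap.add_apply, LinearMap.coe_comp, Function.comp_apply,
      LinearMap.fst_apply, LinearMap.snd_apply, Prod.mk.injEq, map_add,
      map_sub, LinearMap.sub_apply] at hc ⊢
    exact ⟨by linear_combination (norm := module) hc, trivial⟩
  · rintro ⟨m, a⟩ ⟨n, b⟩
    have hc := h1 a b
    simp only [extOf, prodMul_apply, LinearMap.prod_apply, Function.prod,
      LinearMap.add_apply, LinearMap.coe_comp, Function.comp_apply,
      LinearMap.fst_apply, LinearMap.snd_apply, Prod.mk.injEq, map_add,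
      map_sub, LinearMap.sub_apply] at hc ⊢
    exact ⟨by linear_combination (norm := module) hc, trivial⟩
  · intro m
    simp [extOf]
  · rintro ⟨m, a⟩
    simp [extOf]

theorem cohOfEquiv (X Y : AbelianExt K A M p s t10 t11 t20 t21)
    (h : ExtEquiv K A M p s t10 t11 t20 t21 X Y) :
    Cohomologous K A M p s t10 t11 t20 t21
      (cocycleOf hd1 hd2 hd3 X) (cocycleOf hd1 hd2 hd3 Y) := by
  obtain ⟨φ, hφ0, hφ1, hφi, hφj⟩ := h
  have hmem : ∀ a : A, (φ ∘ₗ X.sec - Y.sec) a ∈ LinearMap.ker Y.j := by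
    intro a
    rw [LinearMap.mem_ker, LinearMap.sub_apply, map_sub, LinearMap.comp_apply,
      hφj, X.secProp, Y.secProp, sub_self]
  set c : A →ₗ[K] M := (kerEquiv Y).symm.toLinearMap ∘ₗ
    LinearMap.codRestrict (LinearMap.ker Y.j) (φ ∘ₗ X.sec - Y.sec) hmem with hc
  have key : ∀ a : A, Y.i (c a) = φ (X.sec a) - Y.sec a := by
    intro a
    have := i_kerEquiv_symm Y
      ⟨(φ ∘ₗ X.sec - Y.sec) a, hmem a⟩
    exact this
  refine ⟨c, ?_, ?_⟩
  · intro a b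
    apply Y.iInj
    have E1 : Y.i (extract X X.q0 p X.jMorph0 a b) =
        Y.q0 (φ (X.sec a)) (φ (X.sec b)) - φ (X.sec (p a b)) := by
      rw [← hφi, i_extract, map_sub, hφ0]
    have E2 := i_extract Y Y.q0 p Y.jMorph0 a b
    have E3 : Y.i (t10 a (c b)) = Y.q0 (Y.sec a) (φ (X.sec b) - Y.sec b) := by
      rw [← Y.rep10, key b]
    have E4 : Y.i (t20 (c a) b) = Y.q0 (φ (X.sec a) - Y.sec a) (Y.sec b) := by
      rw [← Y.rep20, key a]
    have E5 := key (p a b)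
    have E6 : Y.q0 (φ (X.sec a) - Y.sec a) (φ (X.sec b) - Y.sec b) = 0 := by
      rw [← key a, ← key b]; exact Y.iMorph0 _ _
    simp only [cocycleOf, map_add, map_sub, map_zero, LinearMap.add_apply,
      LinearMap.sub_apply] at E1 E2 E3 E4 E5 E6 ⊢
    linear_combination (norm := module) E1 - E2 - E3 - E4 + E5 + E6
  · intro a b
    apply Y.iInj
    have E1 : Y.i (extract X X.q1 s X.jMorph1 a b) =
        Y.q1 (φ (X.sec a)) (φ (X.sec b)) - φ (X.sec (s a b)) := by
      rw [← hφi, i_extract, map_sub, hφ1]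
    have E2 := i_extract Y Y.q1 s Y.jMorph1 a b
    have E3 : Y.i (t11 a (c b)) = Y.q1 (Y.sec a) (φ (X.sec b) - Y.sec b) := by
      rw [← Y.rep11, key b]
    have E4 : Y.i (t21 (c a) b) = Y.q1 (φ (X.sec a) - Y.sec a) (Y.sec b) := by
      rw [← Y.rep21, key a]
    have E5 := key (s a b)
    have E6 : Y.q1 (φ (X.sec a) - Y.sec a) (φ (X.sec b) - Y.sec b) = 0 := by
      rw [← key a, ← key b]; exact Y.iMorph1 _ _
    simp only [cocycleOf, map_add, map_sub, map_zero, LinearMap.add_apply,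
      LinearMap.sub_apply] at E1 E2 E3 E4 E5 E6 ⊢
    linear_combination (norm := module) E1 - E2 - E3 - E4 + E5 + E6

theorem equivFG (X : AbelianExt K A M p s t10 t11 t20 t21) :
    ExtEquiv K A M p s t10 t11 t20 t21
      (extOf p s t10 t11 t20 t21 hd1 hd2 hd3 hr1 hr2 hr3 hr4 hr5 hr6 hr7 hr8 hr9
        (cocycleOf hd1 hd2 hd3 X).1 (cocycleOf hd1 hd2 hd3 X).2) X := by
  have ji : ∀ m : M, X.j (X.i m) = 0 := fun m => (X.exact _).mpr ⟨m, rfl⟩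
  refine ⟨X.i ∘ₗ LinearMap.fst K M A + X.sec ∘ₗ LinearMap.snd K M A,
    ?_, ?_, ?_, ?_⟩
  · rintro ⟨m, a⟩ ⟨n, b⟩
    have h0 := X.iMorph0 m n
    have hA := X.rep10 a n
    have hB := X.rep20 m b
    have hE := i_extract X X.q0 p X.jMorph0 a b
    simp only [extOf, cocycleOf, prodMul_apply, LinearMap.add_apply,
      LinearMap.coe_comp, Function.comp_apply, LinearMap.fst_apply,
      LinearMap.snd_apply, map_add, map_sub, LinearMap.sub_apply] at h0 hA hB hE ⊢
    linear_combination (norm := module) -h0 - hA - hB + hE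
  · rintro ⟨m, a⟩ ⟨n, b⟩
    have h0 := X.iMorph1 m n
    have hA := X.rep11 a n
    have hB := X.rep21 m b
    have hE := i_extract X X.q1 s X.jMorph1 a b
    simp only [extOf, cocycleOf, prodMul_apply, LinearMap.add_apply,
      LinearMap.coe_comp, Function.comp_apply, LinearMap.fst_apply,
      LinearMap.snd_apply, map_add, map_sub, LinearMap.sub_apply] at h0 hA hB hE ⊢
    linear_combination (norm := module) -h0 - hA - hB + hE
  · intro m
    simp [extOf]
  · rintro ⟨m, a⟩
    simp [extOf, ji, X.secProp]

theorem cohGF (f : {f : (A →ₗ[K] A →ₗ[K] M) × (A →ₗ[K] A →ₗ[K] M) //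
      IsCocycle2 K A M p s t10 t11 t20 t21 f}) :
    Cohomologous K A M p s t10 t11 t20 t21
      (cocycleOf hd1 hd2 hd3
        (extOf p s t10 t11 t20 t21 hd1 hd2 hd3 hr1 hr2 hr3 hr4 hr5 hr6 hr7 hr8 hr9
          f.1 f.2)) f := by
  refine ⟨0, fun a b => ?_, fun a b => ?_⟩
  · simp only [cocycleOf, LinearMap.zero_apply, map_zero, add_zero, zero_sub,
      neg_zero, sub_zero, zero_add]
    rw [sub_eq_zero]
    apply (extOf p s t10 t11 t20 t21 hd1 hd2 hd3 hr1 hr2 hr3 hr4 hr5 hr6 hr7 hr8 hr9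
      f.1 f.2).iInj
    rw [i_extract]
    refine Prod.ext ?_ ?_ <;> simp [extOf]
  · simp only [cocycleOf, LinearMap.zero_apply, map_zero, add_zero, zero_sub,
      neg_zero, sub_zero, zero_add]
    rw [sub_eq_zero]
    apply (extOf p s t10 t11 t20 t21 hd1 hd2 hd3 hr1 hr2 hr3 hr4 hr5 hr6 hr7 hr8 hr9
      f.1 f.2).iInj
    rw [i_extract]
    refine Prod.ext ?_ ?_ <;> simp [extOf]

end DendAux
end DendAux

/-- for a dendriform algebra `A` (products `p, s`) with
representation `M` (actions `t10, t11, t20, t21`), there is a canonical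
bijection `H²_dend(A, M) ≅ Ext(A, M)` between the second dendriform
cohomology group (2-cocycles modulo coboundaries) and the set of equivalence
classes of abelian extensions of `A` by `M` inducing the given
representation. -/
theorem second_cohomology_classifies_extensions
    {K : Type u} [Field K] {A M : Type u}
    [AddCommGroup A] [Module K A] [AddCommGroup M] [Module K M]
    (p s : A →ₗ[K] A →ₗ[K] A)
    (t10 t11 : A →ₗ[K] M →ₗ[K] M) (t20 t21 : M →ₗ[K] A →ₗ[K] M)
    (hd1 : ∀ a b c : A, p (p a b) c = p a (p b c + s b c))
    (hd2 : ∀ a b c : A, p (s a b) c = s a (p b c))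
    (hd3 : ∀ a b c : A, s (p a b + s a b) c = s a (s b c))
    (hr1 : ∀ (a b : A) (m : M), t10 (p a b) m = t10 a (t10 b m + t11 b m))
    (hr2 : ∀ (a b : A) (m : M), t10 (s a b) m = t11 a (t10 b m))
    (hr3 : ∀ (a b : A) (m : M), t11 (p a b + s a b) m = t11 a (t11 b m))
    (hr4 : ∀ (a : A) (m : M) (c : A), t20 (t10 a m) c = t10 a (t20 m c + t21 m c))
    (hr5 : ∀ (a : A) (m : M) (c : A), t20 (t11 a m) c = t11 a (t20 m c))
    (hr6 : ∀ (a : A) (m : M) (c : A), t21 (t10 a m + t11 a m) c = t11 a (t21 m c))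
    (hr7 : ∀ (m : M) (b c : A), t20 (t20 m b) c = t20 m (p b c + s b c))
    (hr8 : ∀ (m : M) (b c : A), t20 (t21 m b) c = t21 m (p b c))
    (hr9 : ∀ (m : M) (b c : A), t21 (t20 m b + t21 m b) c = t21 m (s b c)) :
    Nonempty
      (Quot (Cohomologous K A M p s t10 t11 t20 t21) ≃
        Quot (ExtEquiv K A M p s t10 t11 t20 t21)) := by
  exact ⟨{
    toFun := Quot.lift
      (fun f => Quot.mk _ (DendAux.extOf p s t10 t11 t20 t21 hd1 hd2 hd3
        hr1 hr2 hr3 hr4 hr5 hr6 hr7 hr8 hr9 f.1 f.2))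
      (fun f g h => Quot.sound (DendAux.equivOfCoh p s t10 t11 t20 t21 hd1 hd2 hd3
        hr1 hr2 hr3 hr4 hr5 hr6 hr7 hr8 hr9 f g h))
    invFun := Quot.lift
      (fun X => Quot.mk _ (DendAux.cocycleOf hd1 hd2 hd3 X))
      (fun X Y h => Quot.sound (DendAux.cohOfEquiv p s t10 t11 t20 t21
        hd1 hd2 hd3 X Y h))
    left_inv := by
      apply Quot.ind
      intro f
      exact Quot.sound (DendAux.cohGF p s t10 t11 t20 t21 hd1 hd2 hd3
        hr1 hr2 hr3 hr4 hr5 hr6 hr7 hr8 hr9 f)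
    right_inv := by
      apply Quot.ind
      intro X
      exact Quot.sound (DendAux.equivFG p s t10 t11 t20 t21 hd1 hd2 hd3
        hr1 hr2 hr3 hr4 hr5 hr6 hr7 hr8 hr9 X) }⟩
end

section
/- Skeletal 2-term Dend_∞-algebras (A_1 →^{d=0} A_0, μ_2, μ_3) are in one-to-one correspondence with tuples (A, M, θ_1, θ_2, σ) where A is a dendriform algebra, (M, θ_1, θ_2) is a representation of A, and σ ∈ Hom(K[C_3] ⊗ A^{⊗3}, M) is a 3-cocycle of A with coefficients in M. -/
/-!
For `d = 0` the conditions (ii)–(iv) are vacuous, (v) and (vi) say exactly that `μ₂` is a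
dendriform product on `A_0` together with a representation of it on `A_1`, and (vii) is
literally `δ_dend μ₃ = 0`; the two kinds of data therefore match field by field.
-/

universe u

section

variable (K : Type u) [Field K] (A0 A1 : Type u)
  [AddCommGroup A0] [Module K A0] [AddCommGroup A1] [Module K A1]

/-- A 2-term `Dend_∞`-algebra on the chain complex `A1 → A0`.  The binary
bracket `μ₂` has components `x0, x1 : A0 ⊗ A0 → A0` (labels `[1], [2]`),
`l0, l1 : A0 ⊗ A1 → A1` and `r0, r1 : A1 ⊗ A0 → A1`; the ternary bracket
`μ₃` has components `s0, s1, s2 : A0^{⊗3} → A1` (labels `[1], [2], [3]`).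
The fields `cii`–`cvii` are the conditions (ii)–(vii) of the definition,
written out at each label (the composition `∘ᵢ` uses the combinatorial maps
`R₀, Rᵢ` of the dendriform operad). -/
structure TwoTermDendInfty where
  d : A1 →ₗ[K] A0
  x0 : A0 →ₗ[K] A0 →ₗ[K] A0
  x1 : A0 →ₗ[K] A0 →ₗ[K] A0
  l0 : A0 →ₗ[K] A1 →ₗ[K] A1
  l1 : A0 →ₗ[K] A1 →ₗ[K] A1
  r0 : A1 →ₗ[K] A0 →ₗ[K] A1
  r1 : A1 →ₗ[K] A0 →ₗ[K] A1
  s0 : A0 →ₗ[K] A0 →ₗ[K] A0 →ₗ[K] A1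
  s1 : A0 →ₗ[K] A0 →ₗ[K] A0 →ₗ[K] A1
  s2 : A0 →ₗ[K] A0 →ₗ[K] A0 →ₗ[K] A1
  cii0 : ∀ a m, d (l0 a m) = x0 a (d m)
  cii1 : ∀ a m, d (l1 a m) = x1 a (d m)
  ciii0 : ∀ m a, d (r0 m a) = x0 (d m) a
  ciii1 : ∀ m a, d (r1 m a) = x1 (d m) a
  civ0 : ∀ m n, l0 (d m) n = r0 m (d n)
  civ1 : ∀ m n, l1 (d m) n = r1 m (d n)
  cv0 : ∀ a b c, x0 (x0 a b) c - x0 a (x0 b c + x1 b c) = d (s0 a b c)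
  cv1 : ∀ a b c, x0 (x1 a b) c - x1 a (x0 b c) = d (s1 a b c)
  cv2 : ∀ a b c, x1 (x0 a b + x1 a b) c - x1 a (x1 b c) = d (s2 a b c)
  cvi1_0 : ∀ a b m, l0 (x0 a b) m - l0 a (l0 b m + l1 b m) = s0 a b (d m)
  cvi1_1 : ∀ a b m, l0 (x1 a b) m - l1 a (l0 b m) = s1 a b (d m)
  cvi1_2 : ∀ a b m, l1 (x0 a b + x1 a b) m - l1 a (l1 b m) = s2 a b (d m)
  cvi2_0 : ∀ a m c, r0 (l0 a m) c - l0 a (r0 m c + r1 m c) = s0 a (d m) c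
  cvi2_1 : ∀ a m c, r0 (l1 a m) c - l1 a (r0 m c) = s1 a (d m) c
  cvi2_2 : ∀ a m c, r1 (l0 a m + l1 a m) c - l1 a (r1 m c) = s2 a (d m) c
  cvi3_0 : ∀ m b c, r0 (r0 m b) c - r0 m (x0 b c + x1 b c) = s0 (d m) b c
  cvi3_1 : ∀ m b c, r0 (r1 m b) c - r1 m (x0 b c) = s1 (d m) b c
  cvi3_2 : ∀ m b c, r1 (r0 m b + r1 m b) c - r1 m (x1 b c) = s2 (d m) b c
  cvii0 : ∀ a b c e,
    s0 (x0 a b) c e - s0 a (x0 b c + x1 b c) e + s0 a b (x0 c e + x1 c e)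
      = r0 (s0 a b c) e + l0 a (s0 b c e + s1 b c e + s2 b c e)
  cvii1 : ∀ a b c e,
    s0 (x1 a b) c e - s1 a (x0 b c) e + s1 a b (x0 c e + x1 c e)
      = r0 (s1 a b c) e + l1 a (s0 b c e)
  cvii2 : ∀ a b c e,
    s1 (x0 a b + x1 a b) c e - s1 a (x1 b c) e + s2 a b (x0 c e)
      = r0 (s2 a b c) e + l1 a (s1 b c e)
  cvii3 : ∀ a b c e,
    s2 (x0 a b + x1 a b) c e - s2 a (x0 b c + x1 b c) e + s2 a b (x1 c e)
      = r1 (s0 a b c + s1 a b c + s2 a b c) e + l1 a (s2 b c e)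

/-- A tuple `(A, M, θ₁, θ₂, σ)`: a dendriform algebra structure `(p0, p1)` on
`A0`, a representation `(t10, t11, t20, t21)` of it on `A1`, and a 3-cocycle
`σ = (σ0, σ1, σ2) ∈ Hom(K[C₃] ⊗ A^{⊗3}, M)`, `δ_dend σ = 0` (the four
`cocycle` conditions, one for each label of `C₄`). -/
structure DendRep3Cocycle where
  p0 : A0 →ₗ[K] A0 →ₗ[K] A0
  p1 : A0 →ₗ[K] A0 →ₗ[K] A0
  hd1 : ∀ a b c, p0 (p0 a b) c = p0 a (p0 b c + p1 b c)
  hd2 : ∀ a b c, p0 (p1 a b) c = p1 a (p0 b c)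
  hd3 : ∀ a b c, p1 (p0 a b + p1 a b) c = p1 a (p1 b c)
  t10 : A0 →ₗ[K] A1 →ₗ[K] A1
  t11 : A0 →ₗ[K] A1 →ₗ[K] A1
  t20 : A1 →ₗ[K] A0 →ₗ[K] A1
  t21 : A1 →ₗ[K] A0 →ₗ[K] A1
  rep1 : ∀ a b m, t10 (p0 a b) m = t10 a (t10 b m + t11 b m)
  rep2 : ∀ a b m, t10 (p1 a b) m = t11 a (t10 b m)
  rep3 : ∀ a b m, t11 (p0 a b + p1 a b) m = t11 a (t11 b m)
  rep4 : ∀ a m c, t20 (t10 a m) c = t10 a (t20 m c + t21 m c)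
  rep5 : ∀ a m c, t20 (t11 a m) c = t11 a (t20 m c)
  rep6 : ∀ a m c, t21 (t10 a m + t11 a m) c = t11 a (t21 m c)
  rep7 : ∀ m b c, t20 (t20 m b) c = t20 m (p0 b c + p1 b c)
  rep8 : ∀ m b c, t20 (t21 m b) c = t21 m (p0 b c)
  rep9 : ∀ m b c, t21 (t20 m b + t21 m b) c = t21 m (p1 b c)
  σ0 : A0 →ₗ[K] A0 →ₗ[K] A0 →ₗ[K] A1
  σ1 : A0 →ₗ[K] A0 →ₗ[K] A0 →ₗ[K] A1
  σ2 : A0 →ₗ[K] A0 →ₗ[K] A0 →ₗ[K] A1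
  cocycle0 : ∀ a b c e,
    σ0 (p0 a b) c e - σ0 a (p0 b c + p1 b c) e + σ0 a b (p0 c e + p1 c e)
      = t20 (σ0 a b c) e + t10 a (σ0 b c e + σ1 b c e + σ2 b c e)
  cocycle1 : ∀ a b c e,
    σ0 (p1 a b) c e - σ1 a (p0 b c) e + σ1 a b (p0 c e + p1 c e)
      = t20 (σ1 a b c) e + t11 a (σ0 b c e)
  cocycle2 : ∀ a b c e,
    σ1 (p0 a b + p1 a b) c e - σ1 a (p1 b c) e + σ2 a b (p0 c e)
      = t20 (σ2 a b c) e + t11 a (σ1 b c e)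
  cocycle3 : ∀ a b c e,
    σ2 (p0 a b + p1 a b) c e - σ2 a (p0 b c + p1 b c) e + σ2 a b (p1 c e)
      = t21 (σ0 a b c + σ1 a b c + σ2 a b c) e + t11 a (σ2 b c e)

end

namespace TwoTermDendInfty

variable {K : Type u} [Field K] {A0 A1 : Type u}
  [AddCommGroup A0] [Module K A0] [AddCommGroup A1] [Module K A1]

def toDendRep3Cocycle (X : TwoTermDendInfty K A0 A1) (hX : X.d = 0) :
    DendRep3Cocycle K A0 A1 where
  p0 := X.x0
  p1 := X.x1
  hd1 a b c := by simpa [hX, sub_eq_zero] using X.cv0 a b c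
  hd2 a b c := by simpa [hX, sub_eq_zero] using X.cv1 a b c
  hd3 a b c := by simpa [hX, sub_eq_zero] using X.cv2 a b c
  t10 := X.l0
  t11 := X.l1
  t20 := X.r0
  t21 := X.r1
  rep1 a b m := by simpa [hX, sub_eq_zero] using X.cvi1_0 a b m
  rep2 a b m := by simpa [hX, sub_eq_zero] using X.cvi1_1 a b m
  rep3 a b m := by simpa [hX, sub_eq_zero] using X.cvi1_2 a b m
  rep4 a m c := by simpa [hX, sub_eq_zero] using X.cvi2_0 a m c
  rep5 a m c := by simpa [hX, sub_eq_zero] using X.cvi2_1 a m c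
  rep6 a m c := by simpa [hX, sub_eq_zero] using X.cvi2_2 a m c
  rep7 m b c := by simpa [hX, sub_eq_zero] using X.cvi3_0 m b c
  rep8 m b c := by simpa [hX, sub_eq_zero] using X.cvi3_1 m b c
  rep9 m b c := by simpa [hX, sub_eq_zero] using X.cvi3_2 m b c
  σ0 := X.s0
  σ1 := X.s1
  σ2 := X.s2
  cocycle0 := X.cvii0
  cocycle1 := X.cvii1
  cocycle2 := X.cvii2
  cocycle3 := X.cvii3

end TwoTermDendInfty

namespace DendRep3Cocycle

variable {K : Type u} [Field K] {A0 A1 : Type u}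
  [AddCommGroup A0] [Module K A0] [AddCommGroup A1] [Module K A1]

def toTwoTermDendInfty (Y : DendRep3Cocycle K A0 A1) : TwoTermDendInfty K A0 A1 where
  d := 0
  x0 := Y.p0
  x1 := Y.p1
  l0 := Y.t10
  l1 := Y.t11
  r0 := Y.t20
  r1 := Y.t21
  s0 := Y.σ0
  s1 := Y.σ1
  s2 := Y.σ2
  cii0 _ _ := by simp
  cii1 _ _ := by simp
  ciii0 _ _ := by simp
  ciii1 _ _ := by simp
  civ0 _ _ := by simp
  civ1 _ _ := by simp
  cv0 a b c := by simpa [sub_eq_zero] using Y.hd1 a b c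
  cv1 a b c := by simpa [sub_eq_zero] using Y.hd2 a b c
  cv2 a b c := by simpa [sub_eq_zero] using Y.hd3 a b c
  cvi1_0 a b m := by simpa [sub_eq_zero] using Y.rep1 a b m
  cvi1_1 a b m := by simpa [sub_eq_zero] using Y.rep2 a b m
  cvi1_2 a b m := by simpa [sub_eq_zero] using Y.rep3 a b m
  cvi2_0 a m c := by simpa [sub_eq_zero] using Y.rep4 a m c
  cvi2_1 a m c := by simpa [sub_eq_zero] using Y.rep5 a m c
  cvi2_2 a m c := by simpa [sub_eq_zero] using Y.rep6 a m c
  cvi3_0 m b c := by simpa [sub_eq_zero] using Y.rep7 m b c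
  cvi3_1 m b c := by simpa [sub_eq_zero] using Y.rep8 m b c
  cvi3_2 m b c := by simpa [sub_eq_zero] using Y.rep9 m b c
  cvii0 := Y.cocycle0
  cvii1 := Y.cocycle1
  cvii2 := Y.cocycle2
  cvii3 := Y.cocycle3

end DendRep3Cocycle

def skeletalEquivDendRep3Cocycle (K : Type u) [Field K] (A0 A1 : Type u)
    [AddCommGroup A0] [Module K A0] [AddCommGroup A1] [Module K A1] :
    {X : TwoTermDendInfty K A0 A1 // X.d = 0} ≃ DendRep3Cocycle K A0 A1 where
  toFun X := X.1.toDendRep3Cocycle X.2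
  invFun Y := ⟨Y.toTwoTermDendInfty, rfl⟩
  left_inv := by
    rintro ⟨⟨d⟩, rfl : d = 0⟩
    rfl
  right_inv _ := rfl

/-- skeletal 2-term `Dend_∞`-algebras (`d = 0`) are in
one-to-one correspondence with tuples `(A, M, θ₁, θ₂, σ)` consisting of a
dendriform algebra `A`, a representation `(M, θ₁, θ₂)` of it, and a 3-cocycle
`σ` of `A` with coefficients in `M`. -/
theorem skeletal_classification
    {K : Type u} [Field K] {A0 A1 : Type u}
    [AddCommGroup A0] [Module K A0] [AddCommGroup A1] [Module K A1] :
    Nonempty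
      ({X : TwoTermDendInfty K A0 A1 // X.d = 0} ≃ DendRep3Cocycle K A0 A1) :=
  ⟨skeletalEquivDendRep3Cocycle K A0 A1⟩
end

section
/- Let V be a graded vector space. The maps Δ_1, Δ_2 on Diass^c(V) = TV ⊗ V ⊗ TV given by Δ_1(v_1⋯v_n ⊗ v ⊗ w_1⋯w_m) = Σ_{i,j≥0, i+j+1≤m} (v_1⋯v_n ⊗ v ⊗ w_1⋯w_i) ⊗ (w_{i+1}⋯w_{i+j} ⊗ w_{i+j+1} ⊗ w_{i+j+2}⋯w_m) and Δ_2(v_1⋯v_n ⊗ v ⊗ w_1⋯w_m) = Σ_{i,j≥0, i+j+1≤n} (v_1⋯v_i ⊗ v_{i+1} ⊗ v_{i+2}⋯v_{i+j+1}) ⊗ (v_{i+j+2}⋯v_n ⊗ v ⊗ w_1⋯w_m) make Diass^c(V) a diassociative coalgebra, i.e. (id ⊗ Δ_1)Δ_1 = (Δ_1 ⊗ id)Δ_1 = (id ⊗ Δ_2)Δ_1, (Δ_2 ⊗ id)Δ_1 = (id ⊗ Δ_1)Δ_2, and (Δ_1 ⊗ id)Δ_2 = (id ⊗ Δ_2)Δ_2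 = (Δ_2 ⊗ id)Δ_2. -/
open scoped TensorProduct

section

variable {K : Type*} [Field K] {V : Type*}

/-- The free module `Diass^c(V) = TV ⊗ V ⊗ TV` on the words
`v₁ ⋯ v_n ⊗ v ⊗ w₁ ⋯ w_m` (with `V` the given basis). -/
abbrev DiassC (K V : Type*) [Field K] := (List V × V × List V) →₀ K

/-- The basis element of `Diass^c(V)` corresponding to a word. -/
noncomputable def wd (x : List V × V × List V) : DiassC K V := Finsupp.single x 1

/-- `Δ₁` on basis elements:
`Δ₁(v₁⋯v_n ⊗ v ⊗ w₁⋯w_m) = Σ_{i,j ≥ 0, i+j+1 ≤ m}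
  (v₁⋯v_n ⊗ v ⊗ w₁⋯w_i) ⊗ (w_{i+1}⋯w_{i+j} ⊗ w_{i+j+1} ⊗ w_{i+j+2}⋯w_m)`. -/
noncomputable def delta1Fun (x : List V × V × List V) : DiassC K V ⊗[K] DiassC K V :=
  ∑ i ∈ Finset.range x.2.2.length, ∑ j ∈ Finset.range (x.2.2.length - i),
    wd (x.1, x.2.1, x.2.2.take i) ⊗ₜ[K]
      wd ((x.2.2.drop i).take j, x.2.2.getD (i + j) x.2.1, x.2.2.drop (i + j + 1))

/-- `Δ₂` on basis elements:
`Δ₂(v₁⋯v_n ⊗ v ⊗ w₁⋯w_m) = Σ_{i,j ≥ 0, i+j+1 ≤ n}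
  (v₁⋯v_i ⊗ v_{i+1} ⊗ v_{i+2}⋯v_{i+j+1}) ⊗ (v_{i+j+2}⋯v_n ⊗ v ⊗ w₁⋯w_m)`. -/
noncomputable def delta2Fun (x : List V × V × List V) : DiassC K V ⊗[K] DiassC K V :=
  ∑ i ∈ Finset.range x.1.length, ∑ j ∈ Finset.range (x.1.length - i),
    wd (x.1.take i, x.1.getD i x.2.1, (x.1.drop (i + 1)).take j) ⊗ₜ[K]
      wd (x.1.drop (i + j + 1), x.2.1, x.2.2)

/-- The comultiplication `Δ₁ : Diass^c(V) → Diass^c(V) ⊗ Diass^c(V)`. -/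
noncomputable def delta1 : DiassC K V →ₗ[K] DiassC K V ⊗[K] DiassC K V :=
  Finsupp.lift (DiassC K V ⊗[K] DiassC K V) K (List V × V × List V) delta1Fun

/-- The comultiplication `Δ₂ : Diass^c(V) → Diass^c(V) ⊗ Diass^c(V)`. -/
noncomputable def delta2 : DiassC K V →ₗ[K] DiassC K V ⊗[K] DiassC K V :=
  Finsupp.lift (DiassC K V ⊗[K] DiassC K V) K (List V × V × List V) delta2Fun

end

/-!
On a basis word `(L, v, R)`, `Δ₁` is a sum over the cuts `p ≤ q < |R|` of `R` into
`R[0,p)`, `R[p,q)`, the letter `R_q` and `R(q,|R|)`, and `Δ₂` does the same to `L`. An iterated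
coproduct is therefore a sum over a cut followed by a cut of one of the resulting pieces. Cutting
again to the left of, inside, or to the right of the first cut are three parametrizations of the
same set of chains `a ≤ b < c ≤ d`, because a slice of a slice is a slice; this identifies all
iterated coproducts that begin with the same `Δⱼ`. The mixed identity
`(Δ₂ ⊗ id)Δ₁ = (id ⊗ Δ₁)Δ₂` only exchanges two independent sums, one cutting `L` and one
cutting `R`.
-/

open Finset TensorProduct

/-- `(p, q) ∈ cuts m` cuts a word `w` of length `m` into `w[0,p)`, `w[p,q)`, `w_q`, `w(q,m)`. -/
def cuts (m : ℕ) : Finset (ℕ × ℕ) := (range m ×ˢ range m).filter fun c => c.1 ≤ c.2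

def doubleCuts (m : ℕ) : Finset (ℕ × ℕ × ℕ × ℕ) :=
  (range m ×ˢ range m ×ˢ range m ×ˢ range m).filter
    fun c => c.1 ≤ c.2.1 ∧ c.2.1 < c.2.2.1 ∧ c.2.2.1 ≤ c.2.2.2

@[simp] theorem mem_cuts {m : ℕ} {c : ℕ × ℕ} : c ∈ cuts m ↔ c.1 ≤ c.2 ∧ c.2 < m := by
  simp only [cuts, mem_filter, mem_product, mem_range]
  omega

@[simp] theorem mem_doubleCuts {m : ℕ} {c : ℕ × ℕ × ℕ × ℕ} :
    c ∈ doubleCuts m ↔ c.1 ≤ c.2.1 ∧ c.2.1 < c.2.2.1 ∧ c.2.2.1 ≤ c.2.2.2 ∧ c.2.2.2 < m := by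
  simp only [doubleCuts, mem_filter, mem_product, mem_range]
  omega

section Reindex

variable {M : Type*} [AddCommMonoid M] (m : ℕ)

theorem sum_cuts_eq_sum_range (f : ℕ × ℕ → M) :
    ∑ c ∈ cuts m, f c = ∑ i ∈ range m, ∑ j ∈ range (m - i), f (i, i + j) := by
  rw [sum_sigma']
  refine (sum_nbij' (fun c => (c.1, c.1 + c.2)) (fun c => ⟨c.1, c.2 - c.1⟩)
    ?_ ?_ ?_ ?_ ?_).symm <;>
    simp +contextual [Sigma.forall] <;> intros <;> omega

variable (f : ℕ × ℕ × ℕ × ℕ → M)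

theorem sum_doubleCuts_split_right :
    ∑ c ∈ doubleCuts m, f c = ∑ c ∈ cuts m, ∑ c' ∈ cuts (m - (c.2 + 1)),
      f (c.1, c.2, c.2 + 1 + c'.1, c.2 + 1 + c'.2) := by
  rw [sum_sigma']
  refine (sum_nbij' (fun c => (c.1.1, c.1.2, c.1.2 + 1 + c.2.1, c.1.2 + 1 + c.2.2))
    (fun c => ⟨(c.1, c.2.1), (c.2.2.1 - (c.2.1 + 1), c.2.2.2 - (c.2.1 + 1))⟩)
    ?_ ?_ ?_ ?_ ?_).symm <;>
    simp +contextual [Sigma.forall, Prod.forall] <;> intros <;> omega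

theorem sum_doubleCuts_split_left :
    ∑ c ∈ doubleCuts m, f c = ∑ c ∈ cuts m, ∑ c' ∈ cuts c.1, f (c'.1, c'.2, c.1, c.2) := by
  rw [sum_sigma']
  refine (sum_nbij' (fun c => (c.2.1, c.2.2, c.1.1, c.1.2))
    (fun c => ⟨(c.2.2.1, c.2.2.2), (c.1, c.2.1)⟩) ?_ ?_ ?_ ?_ ?_).symm <;>
    simp +contextual

theorem sum_doubleCuts_split_middle :
    ∑ c ∈ doubleCuts m, f c = ∑ c ∈ cuts m, ∑ c' ∈ cuts (c.2 - c.1),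
      f (c.1, c.1 + c'.1, c.1 + c'.2 + 1, c.2) := by
  rw [sum_sigma']
  refine (sum_nbij' (fun c => (c.1.1, c.1.1 + c.2.1, c.1.1 + c.2.2 + 1, c.1.2))
    (fun c => ⟨(c.1, c.2.2.2), (c.2.1 - c.1, c.2.2.1 - c.1 - 1)⟩) ?_ ?_ ?_ ?_ ?_).symm <;>
    simp +contextual [Sigma.forall, Prod.forall, Sigma.ext_iff] <;> intros <;> omega

end Reindex

namespace List

variable {α : Type*} (l : List α) {i j k n : ℕ}

theorem take_drop_eq_extract : (l.drop i).take k = l.extract i (i + k) := by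
  simp

theorem extract_drop : (l.drop k).extract i j = l.extract (k + i) (k + j) := by
  simp [Nat.add_sub_add_left]

theorem extract_take (h : j ≤ n) : (l.take n).extract i j = l.extract i j := by
  simp [drop_take, take_take]
  omega

theorem take_extract (h : i + k ≤ j) : (l.extract i j).take k = l.extract i (i + k) := by
  simp [take_take]
  omega

theorem drop_extract : (l.extract i j).drop k = l.extract (i + k) j := by
  simp [drop_take]
  omega

theorem extract_extract {a b : ℕ} (h : i + b ≤ j) :
    (l.extract i j).extract a b = l.extract (i + a) (i + b) := by
  simp [take_take, drop_take, Nat.add_sub_add_left]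
  omega

theorem length_extract (h : j ≤ l.length) : (l.extract i j).length = j - i := by
  simp
  omega

theorem getD_take (h : i < n) (d : α) : (l.take n).getD i d = l.getD i d := by
  simp [getD_eq_getElem?_getD, h]

theorem getD_drop (d : α) : (l.drop k).getD i d = l.getD (k + i) d := by
  simp [getD_eq_getElem?_getD]

theorem getD_extract (h : i + k < j) (d : α) : (l.extract i j).getD k d = l.getD (i + k) d := by
  simp [getD_eq_getElem?_getD, show k < j - i by omega]

theorem getD_congr_default (h : i < l.length) (d d' : α) : l.getD i d = l.getD i d' := by
  simp [getD_eq_getElem?_getD, h]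

end List

section Coassociativity

variable {K : Type*} [Field K] {V : Type*}

theorem diassC_hom_ext {M : Type*} [AddCommMonoid M] [Module K M] {f g : DiassC K V →ₗ[K] M}
    (h : ∀ x, f (wd x) = g (wd x)) : f = g :=
  Finsupp.lhom_ext' fun x => LinearMap.ext_ring (h x)

/-- The default `d` of `getD` is never used (the index is in range); leaving it free lets nested
applications of `Δ₁`, `Δ₂` all use the middle letter of the outer word. -/
theorem delta1_wd (L : List V) (v : V) (R : List V) (d : V) :
    delta1 (K := K) (wd (L, v, R)) = ∑ c ∈ cuts R.length,
      wd (L, v, R.take c.1) ⊗ₜ[K] wd (R.extract c.1 c.2, R.getD c.2 d, R.drop (c.2 + 1)) := by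
  rw [delta1, wd, Finsupp.lift_apply, Finsupp.sum_single_index (by simp), one_smul, delta1Fun,
    sum_cuts_eq_sum_range]
  refine sum_congr rfl fun i _ => sum_congr rfl fun j hj => ?_
  rw [mem_range] at hj
  dsimp only at hj ⊢
  rw [List.take_drop_eq_extract, List.getD_congr_default _ (by omega) v d]

theorem delta2_wd (L : List V) (v : V) (R : List V) (d : V) :
    delta2 (K := K) (wd (L, v, R)) = ∑ c ∈ cuts L.length,
      wd (L.take c.1, L.getD c.1 d, L.extract (c.1 + 1) (c.2 + 1)) ⊗ₜ[K]
        wd (L.drop (c.2 + 1), v, R) := by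
  rw [delta2, wd, Finsupp.lift_apply, Finsupp.sum_single_index (by simp), one_smul, delta2Fun,
    sum_cuts_eq_sum_range]
  refine sum_congr rfl fun i hi => sum_congr rfl fun j _ => ?_
  rw [mem_range] at hi
  dsimp only at hi ⊢
  rw [List.take_drop_eq_extract, Nat.add_right_comm i 1 j,
    List.getD_congr_default _ (by omega) v d]

noncomputable def doubleDelta1 (L : List V) (v : V) (R : List V) :
    DiassC K V ⊗[K] (DiassC K V ⊗[K] DiassC K V) :=
  ∑ c ∈ doubleCuts R.length, wd (L, v, R.take c.1) ⊗ₜ[K]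
    (wd (R.extract c.1 c.2.1, R.getD c.2.1 v, R.extract (c.2.1 + 1) c.2.2.1) ⊗ₜ[K]
      wd (R.extract c.2.2.1 c.2.2.2, R.getD c.2.2.2 v, R.drop (c.2.2.2 + 1)))

theorem map_id_delta1_comp_delta1_wd (L : List V) (v : V) (R : List V) :
    (map LinearMap.id delta1 ∘ₗ delta1) (wd (L, v, R)) = doubleDelta1 (K := K) L v R := by
  simp only [LinearMap.comp_apply, delta1_wd (d := v), map_sum, map_tmul, LinearMap.id_apply,
    tmul_sum, List.length_drop]
  rw [doubleDelta1, sum_doubleCuts_split_right]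
  refine sum_congr rfl fun c _ => sum_congr rfl fun c' _ => ?_
  rw [List.take_drop_eq_extract, List.extract_drop, List.getD_drop, List.drop_drop]
  rfl

theorem assoc_map_delta1_id_comp_delta1_wd (L : List V) (v : V) (R : List V) :
    ((TensorProduct.assoc K _ _ _).toLinearMap ∘ₗ map delta1 LinearMap.id ∘ₗ delta1)
      (wd (L, v, R)) = doubleDelta1 (K := K) L v R := by
  simp only [LinearMap.comp_apply, delta1_wd (d := v), map_sum, map_tmul, LinearMap.id_apply,
    sum_tmul, LinearEquiv.coe_coe, assoc_tmul]
  rw [doubleDelta1, sum_doubleCuts_split_left]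
  refine sum_congr rfl fun c hc => ?_
  rw [mem_cuts] at hc
  rw [List.length_take_of_le (by omega)]
  refine sum_congr rfl fun c' hc' => ?_
  rw [mem_cuts] at hc'
  rw [List.take_take, min_eq_left (by omega), List.extract_take _ (by omega),
    List.getD_take _ (by omega), ← List.extract_eq_drop_take']

theorem map_id_delta2_comp_delta1_wd (L : List V) (v : V) (R : List V) :
    (map LinearMap.id delta2 ∘ₗ delta1) (wd (L, v, R)) = doubleDelta1 (K := K) L v R := by
  simp only [LinearMap.comp_apply, delta1_wd (d := v), map_sum, map_tmul, LinearMap.id_apply,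
    tmul_sum, delta2_wd (d := v)]
  rw [doubleDelta1, sum_doubleCuts_split_middle]
  refine sum_congr rfl fun c hc => ?_
  rw [mem_cuts] at hc
  rw [List.length_extract _ (by omega)]
  refine sum_congr rfl fun c' hc' => ?_
  rw [mem_cuts] at hc'
  rw [List.take_extract _ (by omega), List.getD_extract _ (by omega),
    List.extract_extract _ (by omega), List.drop_extract]
  rfl

noncomputable def doubleDelta2 (L : List V) (v : V) (R : List V) :
    DiassC K V ⊗[K] (DiassC K V ⊗[K] DiassC K V) :=
  ∑ c ∈ doubleCuts L.length,
    wd (L.take c.1, L.getD c.1 v, L.extract (c.1 + 1) (c.2.1 + 1)) ⊗ₜ[K]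
      (wd (L.extract (c.2.1 + 1) c.2.2.1, L.getD c.2.2.1 v, L.extract (c.2.2.1 + 1) (c.2.2.2 + 1))
        ⊗ₜ[K] wd (L.drop (c.2.2.2 + 1), v, R))

theorem map_id_delta2_comp_delta2_wd (L : List V) (v : V) (R : List V) :
    (map LinearMap.id delta2 ∘ₗ delta2) (wd (L, v, R)) = doubleDelta2 (K := K) L v R := by
  simp only [LinearMap.comp_apply, delta2_wd (d := v), map_sum, map_tmul, LinearMap.id_apply,
    tmul_sum, List.length_drop]
  rw [doubleDelta2, sum_doubleCuts_split_right]
  refine sum_congr rfl fun c _ => sum_congr rfl fun c' _ => ?_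
  rw [List.take_drop_eq_extract, List.getD_drop, List.extract_drop, List.drop_drop]
  rfl

theorem assoc_map_delta2_id_comp_delta2_wd (L : List V) (v : V) (R : List V) :
    ((TensorProduct.assoc K _ _ _).toLinearMap ∘ₗ map delta2 LinearMap.id ∘ₗ delta2)
      (wd (L, v, R)) = doubleDelta2 (K := K) L v R := by
  simp only [LinearMap.comp_apply, delta2_wd (d := v), map_sum, map_tmul, LinearMap.id_apply,
    sum_tmul, LinearEquiv.coe_coe, assoc_tmul]
  rw [doubleDelta2, sum_doubleCuts_split_left]
  refine sum_congr rfl fun c hc => ?_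
  rw [mem_cuts] at hc
  rw [List.length_take_of_le (by omega)]
  refine sum_congr rfl fun c' hc' => ?_
  rw [mem_cuts] at hc'
  rw [List.take_take, min_eq_left (by omega), List.getD_take _ (by omega),
    List.extract_take _ (by omega), ← List.extract_eq_drop_take']

theorem assoc_map_delta1_id_comp_delta2_wd (L : List V) (v : V) (R : List V) :
    ((TensorProduct.assoc K _ _ _).toLinearMap ∘ₗ map delta1 LinearMap.id ∘ₗ delta2)
      (wd (L, v, R)) = doubleDelta2 (K := K) L v R := by
  simp only [LinearMap.comp_apply, delta2_wd (d := v), map_sum, map_tmul, LinearMap.id_apply,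
    sum_tmul, LinearEquiv.coe_coe, assoc_tmul, delta1_wd (d := v)]
  rw [doubleDelta2, sum_doubleCuts_split_middle]
  refine sum_congr rfl fun c hc => ?_
  rw [mem_cuts] at hc
  rw [List.length_extract _ (by omega), Nat.add_sub_add_right]
  refine sum_congr rfl fun c' hc' => ?_
  rw [mem_cuts] at hc'
  rw [List.take_extract _ (by omega), List.extract_extract _ (by omega),
    List.getD_extract _ (by omega), List.drop_extract]
  ac_rfl

theorem assoc_map_delta2_id_comp_delta1_wd (L : List V) (v : V) (R : List V) :
    ((TensorProduct.assoc K _ _ _).toLinearMap ∘ₗ map delta2 LinearMap.id ∘ₗ delta1)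
      (wd (L, v, R)) = (map LinearMap.id delta1 ∘ₗ delta2) (wd (K := K) (L, v, R)) := by
  simp only [LinearMap.comp_apply, delta1_wd (d := v), delta2_wd (d := v), map_sum, map_tmul,
    LinearMap.id_apply, sum_tmul, tmul_sum, LinearEquiv.coe_coe, assoc_tmul]
  exact sum_comm

end Coassociativity

/-- `(Diass^c(V) = TV ⊗ V ⊗ TV, Δ₁, Δ₂)` is a diassociative
coalgebra: `(id ⊗ Δ₁)Δ₁ = (Δ₁ ⊗ id)Δ₁ = (id ⊗ Δ₂)Δ₁`,
`(Δ₂ ⊗ id)Δ₁ = (id ⊗ Δ₁)Δ₂`, and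
`(Δ₁ ⊗ id)Δ₂ = (id ⊗ Δ₂)Δ₂ = (Δ₂ ⊗ id)Δ₂` (the associator of the tensor
product is used to compare the two sides). -/
theorem diassC_is_diassociative_coalgebra
    {K : Type*} [Field K] (V : Type*) :
    let d1 := delta1 (K := K) (V := V)
    let d2 := delta2 (K := K) (V := V)
    let α := (TensorProduct.assoc K (DiassC K V) (DiassC K V) (DiassC K V)).toLinearMap
    (TensorProduct.map LinearMap.id d1 ∘ₗ d1
        = α ∘ₗ TensorProduct.map d1 LinearMap.id ∘ₗ delta1) ∧
    (TensorProduct.map LinearMap.id d1 ∘ₗ d1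
        = TensorProduct.map LinearMap.id d2 ∘ₗ d1) ∧
    (α ∘ₗ TensorProduct.map d2 LinearMap.id ∘ₗ delta1
        = TensorProduct.map LinearMap.id d1 ∘ₗ d2) ∧
    (α ∘ₗ TensorProduct.map d1 LinearMap.id ∘ₗ delta2
        = TensorProduct.map LinearMap.id d2 ∘ₗ d2) ∧
    (TensorProduct.map LinearMap.id d2 ∘ₗ d2
        = α ∘ₗ TensorProduct.map d2 LinearMap.id ∘ₗ delta2) := by
  intro d1 d2 α
  refine ⟨diassC_hom_ext fun ⟨L, v, R⟩ => ?_, diassC_hom_ext fun ⟨L, v, R⟩ => ?_,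
    diassC_hom_ext fun ⟨L, v, R⟩ => ?_, diassC_hom_ext fun ⟨L, v, R⟩ => ?_,
    diassC_hom_ext fun ⟨L, v, R⟩ => ?_⟩
  · exact (map_id_delta1_comp_delta1_wd L v R).trans
      (assoc_map_delta1_id_comp_delta1_wd L v R).symm
  · exact (map_id_delta1_comp_delta1_wd L v R).trans (map_id_delta2_comp_delta1_wd L v R).symm
  · exact assoc_map_delta2_id_comp_delta1_wd L v R
  · exact (assoc_map_delta1_id_comp_delta2_wd L v R).trans
      (map_id_delta2_comp_delta2_wd L v R).symm
  · exact (map_id_delta2_comp_delta2_wd L v R).trans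
      (assoc_map_delta2_id_comp_delta2_wd L v R).symm
end
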